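/- Let R be a splitting poset for a Weyl symmetric function χ ∈ ℤ[Λ]^W. If R is fibrous, then R is edge-minimal: no splitting poset for χ is isomorphic, as an edge-colored directed graph, to a proper edge-colored subgraph of R. -/

import Mathlib

open scoped BigOperators RealInnerProductSpace

noncomputable section

/-- The coroot `β∨ = (2/⟨β,β⟩) β` of a vector `β`. -/
def coroot {E : Type*} [NormedAddCommGroup E] [InnerProductSpace ℝ E] (β : E) : E :=
  (2 / ⟪β, β⟫) • β

/-- The reflection `v ↦ v - ⟨v, β∨⟩ β` determined by `β`, as a plain function. -/
def rootReflection {E : Type*} [NormedAddCommGroup E] [InnerProductSpace ℝ E] (β v : E) : E :=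
  v - ⟪v, coroot β⟫ • β

/-- The determinant (sign) of a linear automorphism, as an integer (`±1` on the Weyl group). -/
def sgnDet {E : Type*} [NormedAddCommGroup E] [InnerProductSpace ℝ E] (w : E ≃ₗ[ℝ] E) : ℤ :=
  if LinearMap.det (w : E →ₗ[ℝ] E) = 1 then 1 else -1

/-- A finite crystallographic root system `Φ` spanning the real inner-product space `E`,
with a fixed base of simple roots `{αᵢ}_{i ∈ I}` (a basis of `E`), together with the
corresponding fundamental weights `{ωᵢ}` (the basis dual to the simple coroots). -/
structure RootSystemBase (E : Type*) [NormedAddCommGroup E] [InnerProductSpace ℝ E]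
    (I : Type*) [Fintype I] [DecidableEq I] where
  Φ : Set E
  finite : Φ.Finite
  zero_not_mem : (0 : E) ∉ Φ
  neg_mem : ∀ β ∈ Φ, -β ∈ Φ
  αBasis : Module.Basis I ℝ E
  simple_mem : ∀ i, αBasis i ∈ Φ
  reflect_mem : ∀ β ∈ Φ, ∀ γ ∈ Φ, rootReflection β γ ∈ Φ
  crystallographic : ∀ β ∈ Φ, ∀ γ ∈ Φ, ∃ k : ℤ, ⟪γ, coroot β⟫ = (k : ℝ)
  reduced : ∀ β ∈ Φ, ∀ t : ℝ, t • β ∈ Φ → t = 1 ∨ t = -1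
  base_int : ∀ β ∈ Φ, ∀ i, ∃ k : ℤ, αBasis.repr β i = (k : ℝ)
  base_signs : ∀ β ∈ Φ, (∀ i, 0 ≤ αBasis.repr β i) ∨ (∀ i, αBasis.repr β i ≤ 0)
  ω : I → E
  ω_dual : ∀ i j, ⟪ω i, coroot (αBasis j)⟫ = if i = j then (1 : ℝ) else 0

namespace RootSystemBase

variable {E : Type*} [NormedAddCommGroup E] [InnerProductSpace ℝ E]
  {I : Type*} [Fintype I] [DecidableEq I]

variable (S : RootSystemBase E I)

/-- The simple roots. -/
def α (i : I) : E := S.αBasis i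

/-- The set `Φ⁺` of positive roots. -/
def pos : Set E := {β | β ∈ S.Φ ∧ ∀ i, 0 ≤ S.αBasis.repr β i}

/-- The set `Φ⁻` of negative roots. -/
def neg : Set E := {β | β ∈ S.Φ ∧ ∀ i, S.αBasis.repr β i ≤ 0}

/-- The Weyl group `W`: the subgroup of the linear automorphism group of `E`
generated by the simple reflections. -/
def W : Subgroup (E ≃ₗ[ℝ] E) :=
  Subgroup.closure {w : E ≃ₗ[ℝ] E | ∃ i, ∀ v, w v = rootReflection (S.α i) v}

/-- `μ` lies in the weight lattice `Λ` (the ℤ-span of the fundamental weights). -/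
def IsWeight (μ : E) : Prop := ∃ c : I → ℤ, μ = ∑ i, (c i : ℝ) • S.ω i

/-- `μ` is a dominant weight (a nonnegative-integer combination of the `ωᵢ`). -/
def IsDominant (μ : E) : Prop := ∃ c : I → ℕ, μ = ∑ i, (c i : ℝ) • S.ω i

/-- `μ` is a strongly dominant weight. -/
def IsStronglyDominant (μ : E) : Prop :=
  ∃ c : I → ℤ, (∀ i, 0 < c i) ∧ μ = ∑ i, (c i : ℝ) • S.ω i

/-- The partial order on `Λ`: `μ ≤ ν` iff `ν - μ` is a nonnegative-integer combination
of simple roots. -/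
def wle (μ ν : E) : Prop := ∃ k : I → ℕ, ν - μ = ∑ i, (k i : ℝ) • S.α i

/-- `ϱ`, the sum of the fundamental weights. -/
def rho : E := ∑ i, S.ω i

/-- `ϱ∨ = Σᵢ (2/⟨αᵢ,αᵢ⟩) ωᵢ`. -/
def rhoCheck : E := ∑ i, (2 / ⟪S.α i, S.α i⟫) • S.ω i

/-- The weight diagram `Π(λ)` of a dominant weight. -/
def PiWt (lam : E) : Set E :=
  {μ | S.IsWeight μ ∧
    ∃ w : E ≃ₗ[ℝ] E, w ∈ S.W ∧ ∃ ν : E, S.IsDominant ν ∧ S.wle ν lam ∧ μ = w ν}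

/-- A saturated set of weights. -/
def Saturated (A : Set E) : Prop :=
  ∀ ν ∈ A, ∀ β ∈ S.Φ, ∀ k : ℤ,
    (((0 : ℝ) ≤ (k : ℝ) ∧ (k : ℝ) ≤ ⟪ν, coroot β⟫) ∨
      (⟪ν, coroot β⟫ ≤ (k : ℝ) ∧ (k : ℝ) ≤ 0)) →
    ν - (k : ℝ) • β ∈ A

/-- The `W`-orbit of `lam`. -/
def orbit (lam : E) : Set E := {μ | ∃ w : E ≃ₗ[ℝ] E, w ∈ S.W ∧ μ = w lam}

end RootSystemBase

/-- `e^μ`, a basis element of the group ring. -/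
def expw {E : Type*} [AddCommGroup E] (μ : E) : AddMonoidAlgebra ℤ E :=
  AddMonoidAlgebra.single μ 1

/-- The coefficient of `e^μ` in `φ`. -/
def coeffOf {E : Type*} [AddCommGroup E] (φ : AddMonoidAlgebra ℤ E) (μ : E) : ℤ :=
  (φ.coeff : E →₀ ℤ) μ

/-- The support of an element of the group ring. -/
def suppOf {E : Type*} [AddCommGroup E] (φ : AddMonoidAlgebra ℤ E) : Finset E :=
  (φ.coeff : E →₀ ℤ).support

/-- The action `w ⬝ e^μ = e^{w(μ)}` of a linear automorphism on the group ring. -/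
def actGR {E : Type*} [NormedAddCommGroup E] [InnerProductSpace ℝ E]
    (w : E ≃ₗ[ℝ] E) (φ : AddMonoidAlgebra ℤ E) : AddMonoidAlgebra ℤ E :=
  AddMonoidAlgebra.ofCoeff (Finsupp.mapDomain (⇑w) (φ.coeff : E →₀ ℤ))

namespace RootSystemBase

variable {E : Type*} [NormedAddCommGroup E] [InnerProductSpace ℝ E]
  {I : Type*} [Fintype I] [DecidableEq I]
variable (S : RootSystemBase E I)

/-- `φ` lies in the group ring `ℤ[Λ]`. -/
def InGroupRing (φ : AddMonoidAlgebra ℤ E) : Prop := ∀ μ ∈ suppOf φ, S.IsWeight μ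

/-- `φ` is a Weyl alternant: `w ⬝ φ = det(w) φ` for all `w ∈ W`. -/
def IsAlternant (φ : AddMonoidAlgebra ℤ E) : Prop :=
  ∀ w : E ≃ₗ[ℝ] E, w ∈ S.W → actGR w φ = sgnDet w • φ

/-- `φ` is `W`-invariant. -/
def IsInvariant (φ : AddMonoidAlgebra ℤ E) : Prop :=
  ∀ w : E ≃ₗ[ℝ] E, w ∈ S.W → actGR w φ = φ

/-- The alternation operator `𝒜(φ) = Σ_{w ∈ W} det(w) (w ⬝ φ)`. -/
def Alt (φ : AddMonoidAlgebra ℤ E) : AddMonoidAlgebra ℤ E :=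
  ∑ᶠ w : S.W, sgnDet (w : E ≃ₗ[ℝ] E) • actGR (w : E ≃ₗ[ℝ] E) φ

/-- `χ` is the Weyl bialternant attached to the dominant weight `lam`:  the unique
element of `ℤ[Λ]` with `𝒜(e^ϱ) ⬝ χ = 𝒜(e^{lam+ϱ})`. -/
def IsBialternant (lam : E) (χ : AddMonoidAlgebra ℤ E) : Prop :=
  S.InGroupRing χ ∧ S.Alt (expw S.rho) * χ = S.Alt (expw (lam + S.rho))

end RootSystemBase

/-- A finite ranked poset with covering edges colored by `I`, identified with its
edge-colored Hasse diagram:  `edge i x y` means there is a covering edge `x →_i y`, and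
`rank` is a rank function (each edge raises rank by one). -/
structure ColoredPoset (I : Type*) where
  V : Type
  [fintypeV : Fintype V]
  edge : I → V → V → Prop
  rank : V → ℤ
  rank_edge : ∀ i x y, edge i x y → rank y = rank x + 1

attribute [instance] ColoredPoset.fintypeV

namespace ColoredPoset

variable {I : Type*} (P : ColoredPoset I)

/-- One (undirected) step along an edge whose color lies in `J`. -/
def stepIn (J : Set I) (x y : P.V) : Prop := ∃ i ∈ J, P.edge i x y ∨ P.edge i y x

/-- `x` and `y` lie in the same `J`-component. -/
def connIn (J : Set I) (x y : P.V) : Prop := Relation.ReflTransGen (P.stepIn J) x y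

/-- The `i`-component `comp_i(x)` of `x`. -/
def comp (i : I) (x : P.V) : Set P.V := {y | P.connIn {i} x y}

/-- `ρ_i(x)`: the rank of `x` within its `i`-component. -/
def rhoi (i : I) (x : P.V) : ℕ := (P.rank x - sInf (P.rank '' P.comp i x)).toNat

/-- `l_i(x)`: the length of the `i`-component of `x`. -/
def li (i : I) (x : P.V) : ℕ :=
  (sSup (P.rank '' P.comp i x) - sInf (P.rank '' P.comp i x)).toNat

/-- `δ_i(x) = l_i(x) - ρ_i(x)`: the depth of `x` within its `i`-component. -/
def deltai (i : I) (x : P.V) : ℕ := P.li i x - P.rhoi i x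

/-- `m_i(x) = ρ_i(x) - δ_i(x) = 2ρ_i(x) - l_i(x)`. -/
def mi (i : I) (x : P.V) : ℤ := (P.rhoi i x : ℤ) - (P.deltai i x : ℤ)

/-- The partial order generated by the colored (covering) edges. -/
def ple (x y : P.V) : Prop := Relation.ReflTransGen (fun a b => ∃ i, P.edge i a b) x y

/-- The poset is connected. -/
def Connected : Prop := ∀ x y : P.V, P.connIn Set.univ x y

/-- The poset is fibrous:  every `i`-component is a chain. -/
def Fibrous : Prop :=
  ∀ (i : I) (x y : P.V), P.connIn {i} x y →
    Relation.ReflTransGen (P.edge i) x y ∨ Relation.ReflTransGen (P.edge i) y x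

end ColoredPoset

namespace RootSystemBase

variable {E : Type*} [NormedAddCommGroup E] [InnerProductSpace ℝ E]
  {I : Type*} [Fintype I] [DecidableEq I]
variable (S : RootSystemBase E I)

/-- The weight `wt(x) = Σᵢ m_i(x) ωᵢ` of an element of an edge-colored ranked poset. -/
def wtv (P : ColoredPoset I) (x : P.V) : E := ∑ i, (P.mi i x : ℝ) • S.ω i

/-- `P` is `M_Φ`-structured:  `wt(s) + αᵢ = wt(t)` whenever `s →_i t`. -/
def MStruct (P : ColoredPoset I) : Prop :=
  ∀ (i : I) (x y : P.V), P.edge i x y → S.wtv P x + S.α i = S.wtv P y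

/-- The weight generating function `WGF(P) = Σ_{x ∈ P} e^{wt(x)}`. -/
def WGF (P : ColoredPoset I) : AddMonoidAlgebra ℤ E := ∑ x : P.V, expw (S.wtv P x)

/-- `P` is a splitting poset for `χ`:  `P` is `M_Φ`-structured and `WGF(P) = χ`. -/
def IsSplittingPoset (P : ColoredPoset I) (χ : AddMonoidAlgebra ℤ E) : Prop :=
  S.MStruct P ∧ S.WGF P = χ

end RootSystemBase

/-!
Comparing weight generating functions, `Q` and `P` have equally many elements, so `f` is a
bijection, and for every color `i` the multisets of values `⟪wt x, αᵢ∨⟫ = mᵢ(x)` agree; in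
particular so do the sums of `mᵢ(x)²`. On an `i`-chain of length `n` the values `mᵢ` are
`-n, -n + 2, …, n`, and `∑ₖ (2k - n)² = 2 ∑ₖ (k + 1)(n - k)` rewrites `∑ₓ mᵢ(x)²` as
`2 ∑ₓ (ρᵢ(x) + 1) δᵢ(x)`. The `i`-components of `Q` embed into those of `P`, so `ρᵢ` and `δᵢ`
can only drop along `f`, and at the tail of an `i`-edge of `P` missed by `f` the depth `δᵢ`
drops from a positive value to `0`: the second sum is strictly smaller for `Q`.
-/

open Finset

namespace ColoredPoset

variable {I : Type*} {P Q : ColoredPoset I} {i : I} {J : Set I}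

lemma stepIn_symm {x y : P.V} (h : P.stepIn J x y) : P.stepIn J y x :=
  let ⟨j, hj, hxy⟩ := h
  ⟨j, hj, hxy.symm⟩

lemma connIn_symm {x y : P.V} (h : P.connIn J x y) : P.connIn J y x := by
  induction h with
  | refl => exact .refl
  | tail _ hstep ih => exact .head (stepIn_symm hstep) ih

lemma mem_comp_self (i : I) (x : P.V) : x ∈ P.comp i x := .refl

lemma mem_comp_of_edge {a b : P.V} (h : P.edge i a b) : b ∈ P.comp i a :=
  .single ⟨i, Set.mem_singleton i, .inl h⟩

lemma mem_comp_of_edge' {a b : P.V} (h : P.edge i a b) : a ∈ P.comp i b :=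
  .single ⟨i, Set.mem_singleton i, .inr h⟩

lemma comp_eq_of_mem {x y : P.V} (h : y ∈ P.comp i x) : P.comp i y = P.comp i x := by
  ext z
  exact ⟨fun hz => Relation.ReflTransGen.trans h hz,
    fun hz => Relation.ReflTransGen.trans (connIn_symm h) hz⟩

lemma comp_eq_comp_iff {x y : P.V} : P.comp i y = P.comp i x ↔ y ∈ P.comp i x :=
  ⟨fun h => h ▸ mem_comp_self i y, comp_eq_of_mem⟩

lemma exists_rank_eq_of_connIn {y z : P.V} (h : P.connIn J y z) {r : ℤ}
    (hyr : P.rank y ≤ r) (hrz : r ≤ P.rank z) : ∃ w, P.connIn J y w ∧ P.rank w = r := by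
  induction h with
  | refl => exact ⟨y, .refl, le_antisymm hyr hrz⟩
  | @tail z' z hyz' hstep ih =>
    by_cases hr : r ≤ P.rank z'
    · exact ih hr
    · refine ⟨z, hyz'.tail hstep, ?_⟩
      obtain ⟨j, -, h | h⟩ := hstep <;> have := P.rank_edge _ _ _ h <;> omega

variable (P) in
def minRank (i : I) (x : P.V) : ℤ := sInf (P.rank '' P.comp i x)

variable (P) in
def maxRank (i : I) (x : P.V) : ℤ := sSup (P.rank '' P.comp i x)

lemma minRank_le {x y : P.V} (hy : y ∈ P.comp i x) : P.minRank i x ≤ P.rank y :=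
  csInf_le (Set.toFinite _).bddBelow ⟨y, hy, rfl⟩

lemma le_maxRank {x y : P.V} (hy : y ∈ P.comp i x) : P.rank y ≤ P.maxRank i x :=
  le_csSup (Set.toFinite _).bddAbove ⟨y, hy, rfl⟩

lemma exists_rank_eq_minRank (i : I) (x : P.V) : ∃ m ∈ P.comp i x, P.rank m = P.minRank i x :=
  (Set.image_nonempty.2 ⟨x, mem_comp_self i x⟩).csInf_mem (Set.toFinite _)

lemma exists_rank_eq_maxRank (i : I) (x : P.V) : ∃ m ∈ P.comp i x, P.rank m = P.maxRank i x :=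
  (Set.image_nonempty.2 ⟨x, mem_comp_self i x⟩).csSup_mem (Set.toFinite _)

lemma exists_mem_comp_rank_eq (x : P.V) {r : ℤ} (h₁ : P.minRank i x ≤ r)
    (h₂ : r ≤ P.maxRank i x) : ∃ y ∈ P.comp i x, P.rank y = r := by
  obtain ⟨m, hm, hmr⟩ := exists_rank_eq_minRank i x
  obtain ⟨M, hM, hMr⟩ := exists_rank_eq_maxRank i x
  obtain ⟨y, hy, hyr⟩ := exists_rank_eq_of_connIn ((connIn_symm hm).trans hM)
    (hmr.trans_le h₁) (h₂.trans_eq hMr.symm)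
  exact ⟨y, hm.trans hy, hyr⟩

lemma minRank_eq_of_mem {x y : P.V} (h : y ∈ P.comp i x) : P.minRank i y = P.minRank i x := by
  rw [minRank, comp_eq_of_mem h, minRank]

lemma maxRank_eq_of_mem {x y : P.V} (h : y ∈ P.comp i x) : P.maxRank i y = P.maxRank i x := by
  rw [maxRank, comp_eq_of_mem h, maxRank]

lemma rhoi_cast (i : I) (x : P.V) : (P.rhoi i x : ℤ) = P.rank x - P.minRank i x :=
  Int.toNat_of_nonneg (sub_nonneg.2 (minRank_le (mem_comp_self i x)))

lemma li_cast (i : I) (x : P.V) : (P.li i x : ℤ) = P.maxRank i x - P.minRank i x :=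
  Int.toNat_of_nonneg (sub_nonneg.2
    ((minRank_le (mem_comp_self i x)).trans (le_maxRank (mem_comp_self i x))))

lemma deltai_cast (i : I) (x : P.V) : (P.deltai i x : ℤ) = P.maxRank i x - P.rank x := by
  have := rhoi_cast i x
  have := li_cast i x
  have := le_maxRank (mem_comp_self i x)
  unfold deltai
  omega

lemma mi_eq (i : I) (x : P.V) : P.mi i x = 2 * P.rhoi i x - P.li i x := by
  have := rhoi_cast i x
  have := li_cast i x
  have := deltai_cast i x
  unfold mi
  omega

lemma li_eq_of_mem {x y : P.V} (h : y ∈ P.comp i x) : P.li i y = P.li i x := by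
  unfold li
  rw [comp_eq_of_mem h]

lemma rhoi_le_li_of_mem {x y : P.V} (h : y ∈ P.comp i x) : P.rhoi i y ≤ P.li i x := by
  have := rhoi_cast i y
  have := li_cast i x
  have := minRank_eq_of_mem h
  have := le_maxRank h
  omega

lemma reflTransGen_rank_le {x y : P.V} (h : Relation.ReflTransGen (P.edge i) x y) :
    P.rank x ≤ P.rank y := by
  induction h with
  | refl => exact le_rfl
  | tail _ hstep ih => have := P.rank_edge _ _ _ hstep; omega

lemma eq_of_reflTransGen_of_rank_le {x y : P.V} (h : Relation.ReflTransGen (P.edge i) x y)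
    (hr : P.rank y ≤ P.rank x) : x = y := by
  rcases h.cases_head with hxy | ⟨c, hxc, hcy⟩
  · exact hxy
  · have := P.rank_edge _ _ _ hxc
    have := reflTransGen_rank_le hcy
    omega

variable (P) in
def FibrousAt (i : I) : Prop :=
  ∀ x y : P.V, P.connIn {i} x y →
    Relation.ReflTransGen (P.edge i) x y ∨ Relation.ReflTransGen (P.edge i) y x

namespace FibrousAt

variable (hP : P.FibrousAt i)
include hP

lemma rank_injOn {x y z : P.V} (hy : y ∈ P.comp i x) (hz : z ∈ P.comp i x)
    (hr : P.rank y = P.rank z) : y = z := by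
  rcases hP y z ((connIn_symm hy).trans hz) with h | h
  · exact eq_of_reflTransGen_of_rank_le h hr.ge
  · exact (eq_of_reflTransGen_of_rank_le h hr.le).symm

lemma eq_of_edge_of_edge {a b c : P.V} (hb : P.edge i a b) (hc : P.edge i a c) : b = c :=
  hP.rank_injOn (mem_comp_of_edge hb) (mem_comp_of_edge hc)
    ((P.rank_edge _ _ _ hb).trans (P.rank_edge _ _ _ hc).symm)

lemma eq_of_edge_of_edge' {a b c : P.V} (ha : P.edge i a c) (hb : P.edge i b c) : a = b := by
  have := P.rank_edge _ _ _ ha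
  have := P.rank_edge _ _ _ hb
  exact hP.rank_injOn (mem_comp_of_edge' ha) (mem_comp_of_edge' hb) (by omega)

lemma exists_edge_of_deltai_pos {a : P.V} (h : 0 < P.deltai i a) : ∃ b, P.edge i a b := by
  obtain ⟨M, hM, hMr⟩ := exists_rank_eq_maxRank i a
  have := deltai_cast i a
  rcases hP a M hM with haM | hMa
  · rcases haM.cases_head with rfl | ⟨b, hab, -⟩
    · omega
    · exact ⟨b, hab⟩
  · have := reflTransGen_rank_le hMa
    omega

end FibrousAt

-- Partial sums of the defect in the chain identity; they vanish at `N = n + 1`.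
lemma sum_range_chain_defect (n N : ℕ) :
    ∑ k ∈ range N, ((2 * k - n : ℤ) ^ 2 - 2 * (k + 1) * (n - k))
      = (N * (n + 1 - N) * (n - 2 * N) : ℤ) := by
  induction N with
  | zero => simp
  | succ N ih =>
    rw [sum_range_succ, ih]
    push_cast
    ring

open Classical in
lemma sum_eq_zero_of_sum_comp_eq_zero (i : I) (F : P.V → ℤ)
    (h : ∀ x, ∑ y with y ∈ P.comp i x, F y = 0) : ∑ x, F x = 0 := by
  rw [← sum_fiberwise univ (fun x => P.comp i x) F]
  refine sum_eq_zero fun c _ => ?_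
  by_cases hc : ∃ x, P.comp i x = c
  · obtain ⟨x, rfl⟩ := hc
    simp_rw [comp_eq_comp_iff]
    exact h x
  · exact sum_eq_zero fun y hy => absurd (mem_filter.1 hy).2 (not_exists.1 hc y)

open Classical in
lemma FibrousAt.sum_comp_eq_sum_range (hP : P.FibrousAt i) (x : P.V) (h : ℕ → ℤ) :
    ∑ y with y ∈ P.comp i x, h (P.rhoi i y) = ∑ k ∈ range (P.li i x + 1), h k := by
  refine sum_nbij (fun y => P.rhoi i y) ?_ ?_ ?_ fun _ _ => rfl
  · intro y hy
    exact mem_range.2 (Nat.lt_succ_of_le (rhoi_le_li_of_mem (mem_filter.1 hy).2))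
  · intro y hy z hz hyz
    have hy := (mem_filter.1 hy).2
    have hz := (mem_filter.1 hz).2
    have := rhoi_cast i y
    have := rhoi_cast i z
    have := minRank_eq_of_mem hy
    have := minRank_eq_of_mem hz
    exact hP.rank_injOn hy hz (by simp only at hyz; omega)
  · intro k hk
    have hk := mem_range.1 hk
    have := li_cast i x
    obtain ⟨y, hy, hyr⟩ := exists_mem_comp_rank_eq (i := i) x (r := P.minRank i x + k)
      (by omega) (by omega)
    have := rhoi_cast i y
    have := minRank_eq_of_mem hy
    exact ⟨y, mem_filter.2 ⟨mem_univ y, hy⟩, by simp only; omega⟩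

theorem FibrousAt.sum_mi_sq (hP : P.FibrousAt i) :
    ∑ x, P.mi i x ^ 2 = 2 * ∑ x, ((P.rhoi i x : ℤ) + 1) * P.deltai i x := by
  classical
  rw [mul_sum, ← sub_eq_zero, ← sum_sub_distrib]
  refine sum_eq_zero_of_sum_comp_eq_zero i _ fun x => ?_
  let n := P.li i x
  calc ∑ y with y ∈ P.comp i x, (P.mi i y ^ 2 - 2 * (((P.rhoi i y : ℤ) + 1) * P.deltai i y))
      = ∑ y with y ∈ P.comp i x,
          ((2 * P.rhoi i y - n : ℤ) ^ 2 - 2 * (P.rhoi i y + 1) * (n - P.rhoi i y)) := by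
        refine sum_congr rfl fun y hy => ?_
        have hy := (mem_filter.1 hy).2
        have hδ : (P.deltai i y : ℤ) = n - P.rhoi i y := by
          have := rhoi_cast i y
          have := deltai_cast i y
          have := li_cast i x
          have := minRank_eq_of_mem hy
          have := maxRank_eq_of_mem hy
          omega
        rw [mi_eq, li_eq_of_mem hy, hδ]
        ring
    _ = ∑ k ∈ range (n + 1), ((2 * k - n : ℤ) ^ 2 - 2 * (k + 1) * (n - k)) :=
        hP.sum_comp_eq_sum_range x fun k => (2 * k - n : ℤ) ^ 2 - 2 * (k + 1) * (n - k)
    _ = 0 := by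
        rw [sum_range_chain_defect]
        push_cast
        ring

section Hom

variable {f : Q.V → P.V} (hf : ∀ i x y, Q.edge i x y → P.edge i (f x) (f y))
include hf

lemma connIn_map {x y : Q.V} (h : Q.connIn J x y) : P.connIn J (f x) (f y) :=
  Relation.ReflTransGen.lift f
    (fun _ _ ⟨j, hj, hab⟩ => ⟨j, hj, hab.imp (hf j _ _) (hf j _ _)⟩) _ _ h

lemma rank_map_sub_eq {x y : Q.V} (h : Q.connIn J x y) :
    P.rank (f y) - Q.rank y = P.rank (f x) - Q.rank x := by
  induction h with
  | refl => rfl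
  | tail _ hstep ih =>
    obtain ⟨j, -, h | h⟩ := hstep <;>
      have := Q.rank_edge _ _ _ h <;> have := P.rank_edge _ _ _ (hf _ _ _ h) <;> omega

lemma rhoi_le_rhoi_map (i : I) (x : Q.V) : Q.rhoi i x ≤ P.rhoi i (f x) := by
  obtain ⟨m, hm, hmr⟩ := exists_rank_eq_minRank i x
  have := minRank_le (connIn_map hf hm)
  have := rank_map_sub_eq hf hm
  have := rhoi_cast i x
  have := rhoi_cast i (f x)
  omega

lemma deltai_le_deltai_map (i : I) (x : Q.V) : Q.deltai i x ≤ P.deltai i (f x) := by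
  obtain ⟨M, hM, hMr⟩ := exists_rank_eq_maxRank i x
  have := le_maxRank (connIn_map hf hM)
  have := rank_map_sub_eq hf hM
  have := deltai_cast i x
  have := deltai_cast i (f x)
  omega

lemma FibrousAt.of_injective (hP : P.FibrousAt i) (hinj : Function.Injective f) :
    Q.FibrousAt i := by
  intro x y h
  induction h with
  | refl => exact .inl .refl
  | @tail z y _ hstep ih =>
    obtain ⟨j, rfl, hzy | hyz⟩ := hstep
    · rcases ih with hxz | hzx
      · exact .inl (hxz.tail hzy)
      · rcases hzx.cases_head with rfl | ⟨w, hzw, hwx⟩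
        · exact .inl (.single hzy)
        · rw [← hinj (hP.eq_of_edge_of_edge (hf _ _ _ hzw) (hf _ _ _ hzy))]
          exact .inr hwx
    · rcases ih with hxz | hzx
      · rcases hxz.cases_tail with rfl | ⟨w, hxw, hwz⟩
        · exact .inr (.single hyz)
        · rw [← hinj (hP.eq_of_edge_of_edge' (hf _ _ _ hwz) (hf _ _ _ hyz))]
          exact .inl hxw
      · exact .inr (hzx.head hyz)

theorem FibrousAt.sum_lt_of_edge_not_mem_image (hP : P.FibrousAt i)
    (hbij : Function.Bijective f) {x y : P.V} (hxy : P.edge i x y)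
    (hmiss : ∀ a b, Q.edge i a b → f a = x → f b ≠ y) :
    ∑ a, ((Q.rhoi i a : ℤ) + 1) * Q.deltai i a < ∑ x, ((P.rhoi i x : ℤ) + 1) * P.deltai i x := by
  obtain ⟨a, rfl⟩ := hbij.2 x
  have hQa : Q.deltai i a = 0 := by
    by_contra hpos
    obtain ⟨b, hab⟩ := (hP.of_injective hf hbij.1).exists_edge_of_deltai_pos (Nat.pos_of_ne_zero hpos)
    exact hmiss a b hab rfl (hP.eq_of_edge_of_edge (hf _ _ _ hab) hxy)
  have hPa : 0 < P.deltai i (f a) := by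
    have := deltai_cast i (f a)
    have := le_maxRank (mem_comp_of_edge hxy)
    have := P.rank_edge _ _ _ hxy
    omega
  calc ∑ a, ((Q.rhoi i a : ℤ) + 1) * Q.deltai i a
      < ∑ a, ((P.rhoi i (f a) : ℤ) + 1) * P.deltai i (f a) := by
        refine sum_lt_sum (fun b _ => ?_) ⟨a, mem_univ a, ?_⟩
        · exact mul_le_mul (by exact_mod_cast Nat.succ_le_succ (rhoi_le_rhoi_map hf i b))
            (by exact_mod_cast deltai_le_deltai_map hf i b) (by positivity) (by positivity)
        · rw [hQa]
          positivity
    _ = ∑ x, ((P.rhoi i x : ℤ) + 1) * P.deltai i x :=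
        hbij.sum_comp fun x => ((P.rhoi i x : ℤ) + 1) * P.deltai i x

end Hom

end ColoredPoset

namespace RootSystemBase

variable {E : Type*} [NormedAddCommGroup E] [InnerProductSpace ℝ E]
  {I : Type*} [Fintype I] [DecidableEq I] (S : RootSystemBase E I) {P Q : ColoredPoset I}

lemma sum_comp_wtv_eq_of_WGF_eq {M : Type*} [AddCommGroup M] (g : E → M)
    (h : S.WGF Q = S.WGF P) : ∑ x, g (S.wtv Q x) = ∑ x, g (S.wtv P x) := by
  have key : ∀ R : ColoredPoset I,
      Finsupp.linearCombination ℤ g (S.WGF R).coeff = ∑ x, g (S.wtv R x) := by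
    intro R
    simp [WGF, expw, AddMonoidAlgebra.coeff_sum, Finsupp.linearCombination_single]
  rw [← key, ← key, h]

lemma card_eq_of_WGF_eq (h : S.WGF Q = S.WGF P) : Fintype.card Q.V = Fintype.card P.V := by
  simpa using S.sum_comp_wtv_eq_of_WGF_eq (fun _ => (1 : ℤ)) h

lemma inner_wtv_coroot (R : ColoredPoset I) (i : I) (x : R.V) :
    ⟪S.wtv R x, coroot (S.α i)⟫ = R.mi i x := by
  simp [wtv, sum_inner, real_inner_smul_left, α, S.ω_dual]

lemma sum_mi_sq_eq_of_WGF_eq (h : S.WGF Q = S.WGF P) (i : I) :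
    ∑ x, Q.mi i x ^ 2 = ∑ x, P.mi i x ^ 2 := by
  have := S.sum_comp_wtv_eq_of_WGF_eq (fun μ => ⟪μ, coroot (S.α i)⟫ ^ 2) h
  simp only [inner_wtv_coroot] at this
  exact_mod_cast this

end RootSystemBase

theorem statement15_general {E : Type*} [NormedAddCommGroup E] [InnerProductSpace ℝ E]
    {I : Type*} [Fintype I] [DecidableEq I]
    (S : RootSystemBase E I) (χ : AddMonoidAlgebra ℤ E)
    (P : ColoredPoset I) (hP : S.IsSplittingPoset P χ) (hfib : P.Fibrous) :
    ∀ Q : ColoredPoset I, S.IsSplittingPoset Q χ →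
      ∀ f : Q.V → P.V, Function.Injective f →
        (∀ (i : I) (x y : Q.V), Q.edge i x y → P.edge i (f x) (f y)) →
        (Function.Surjective f ∧
          ∀ (i : I) (x y : P.V), P.edge i x y →
            ∃ a b : Q.V, Q.edge i a b ∧ f a = x ∧ f b = y) := by
  intro Q hQ f hinj hf
  have hWGF : S.WGF Q = S.WGF P := hQ.2.trans hP.2.symm
  have hbij : Function.Bijective f :=
    (Fintype.bijective_iff_injective_and_card f).2 ⟨hinj, S.card_eq_of_WGF_eq hWGF⟩
  refine ⟨hbij.2, fun i x y hxy => ?_⟩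
  by_contra hmiss
  push Not at hmiss
  have hPi : P.FibrousAt i := hfib i
  have hlt := hPi.sum_lt_of_edge_not_mem_image hf hbij hxy hmiss
  have hsq := S.sum_mi_sq_eq_of_WGF_eq hWGF i
  rw [(hPi.of_injective hf hinj).sum_mi_sq, hPi.sum_mi_sq] at hsq
  omega

/-- **Edge-minimality of fibrous splitting posets** (Proposition 4.9):  if `R` is a fibrous
splitting poset for a Weyl symmetric function `χ ∈ ℤ[Λ]^W`, then no splitting poset for
`χ` is isomorphic (as an edge-colored directed graph) to a proper edge-colored subgraph
of `R`:  any injective edge-and-color-preserving map from a splitting poset for `χ` into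
`R` is onto all vertices and all colored edges of `R`. -/
theorem statement15 {E : Type*} [NormedAddCommGroup E] [InnerProductSpace ℝ E]
    [FiniteDimensional ℝ E] {I : Type*} [Fintype I] [DecidableEq I]
    (S : RootSystemBase E I) (χ : AddMonoidAlgebra ℤ E)
    (hχgr : S.InGroupRing χ) (hχinv : S.IsInvariant χ)
    (P : ColoredPoset I) (hP : S.IsSplittingPoset P χ) (hfib : P.Fibrous) :
    ∀ Q : ColoredPoset I, S.IsSplittingPoset Q χ →
      ∀ f : Q.V → P.V, Function.Injective f →
        (∀ (i : I) (x y : Q.V), Q.edge i x y → P.edge i (f x) (f y)) →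
        (Function.Surjective f ∧
          ∀ (i : I) (x y : P.V), P.edge i x y →
            ∃ a b : Q.V, Q.edge i a b ∧ f a = x ∧ f b = y) :=
  statement15_general S χ P hP hfib
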